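/- arXiv:2305.04340 — 6 statements merged into one kernel-verified Lean document; each statement's English description precedes it below -/
import Mathlib

section
/- Let $\boldsymbol{M}$ be a positive definite $d\times d$ matrix with eigenvalues $\lambda_1 \ge \cdots \ge \lambda_d > 0$, and let $\boldsymbol{A}, \boldsymbol{B}, \boldsymbol{E}, \boldsymbol{F}$ be matrices with orthonormal columns of compatible sizes (each satisfying $\boldsymbol{X}^\top\boldsymbol{X} = I_d$). Then $\frac{\lambda_d}{2}\|\boldsymbol{A}\boldsymbol{B}^\top - \boldsymbol{E}\boldsymbol{F}^\top\|_F^2 \le \langle \boldsymbol{A}\boldsymbol{M}\boldsymbol{B}^\top,\ \boldsymbol{A}\boldsymbol{B}^\top - \boldsymbol{E}\boldsymbol{F}^\top\rangle \le \frac{\lambda_1}{2}\|\boldsymbol{A}\boldsymbol{B}^\top - \boldsymbol{E}\boldsymbol{F}^\top\|_F^2$. -/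
open Matrix

/-- Frobenius norm of a real matrix: `√(Tr(Aᵀ A))`. -/
noncomputable def frobNorm {m n : Type*} [Fintype m] [Fintype n]
    (A : Matrix m n ℝ) : ℝ :=
  Real.sqrt ((Aᵀ * A).trace)

/-- Trace (Frobenius) inner product of two real matrices: `⟨X, Y⟩ = Tr(Xᵀ Y)`. -/
noncomputable def matInner {m n : Type*} [Fintype m] [Fintype n]
    (X Y : Matrix m n ℝ) : ℝ :=
  (Xᵀ * Y).trace

/-!
Write `G = FᵀB`. For symmetric `P`, `⟨A P Bᵀ, ABᵀ - EFᵀ⟩ = tr(P N)` with `N = 1 - AᵀE G`, and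
orthonormality makes `N + Nᵀ` the Gram sum `(A - E G)ᵀ(A - E G) + (B - F G)ᵀ(B - F G)`. Hence
`P ↦ ⟨A P Bᵀ, ABᵀ - EFᵀ⟩` is a linear functional that is nonnegative on positive semidefinite
matrices, and at `P = 1` it equals `½‖ABᵀ - EFᵀ‖²`. Applying it to `M - λ_d 1 ⪰ 0` and
`λ₁ 1 - M ⪰ 0` gives the two bounds.
-/

open scoped MatrixOrder

variable {m n k : Type*} [Fintype m] [Fintype n] [Fintype k]

lemma Matrix.IsHermitian.posSemidef_sub_smul_one [DecidableEq k] {M : Matrix k k ℝ}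
    (hM : M.IsHermitian) {c : ℝ} (h : ∀ i, c ≤ hM.eigenvalues i) : (M - c • 1).PosSemidef := by
  have : algebraMap ℝ (Matrix k k ℝ) c ≤ M := by
    rw [algebraMap_le_iff_le_spectrum hM.isSelfAdjoint, hM.spectrum_real_eq_range_eigenvalues]
    rintro _ ⟨i, rfl⟩
    exact h i
  rwa [Matrix.le_iff, Algebra.algebraMap_eq_smul_one] at this

lemma Matrix.IsHermitian.posSemidef_smul_one_sub [DecidableEq k] {M : Matrix k k ℝ}
    (hM : M.IsHermitian) {c : ℝ} (h : ∀ i, hM.eigenvalues i ≤ c) : (c • 1 - M).PosSemidef := by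
  have : M ≤ algebraMap ℝ (Matrix k k ℝ) c := by
    rw [le_algebraMap_iff_spectrum_le hM.isSelfAdjoint, hM.spectrum_real_eq_range_eigenvalues]
    rintro _ ⟨i, rfl⟩
    exact h i
  rwa [Matrix.le_iff, Algebra.algebraMap_eq_smul_one] at this

lemma Matrix.PosSemidef.trace_mul_transpose_mul_self_nonneg {P : Matrix k k ℝ}
    (hP : P.PosSemidef) (X : Matrix m k ℝ) : 0 ≤ (P * (Xᵀ * X)).trace := by
  rw [← Matrix.mul_assoc, trace_mul_comm, ← Matrix.mul_assoc]
  simpa using (hP.mul_mul_conjTranspose_same X).trace_nonneg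

lemma Matrix.IsSymm.two_mul_trace_mul {P : Matrix k k ℝ} (hP : P.IsSymm) (N : Matrix k k ℝ) :
    2 * (P * N).trace = (P * (N + Nᵀ)).trace := by
  have : (P * Nᵀ).trace = (P * N).trace := by
    rw [← trace_transpose, transpose_mul, transpose_transpose, hP.eq, trace_mul_comm]
  rw [Matrix.mul_add, trace_add, this, two_mul]

lemma matInner_comm (X Y : Matrix m n ℝ) : matInner X Y = matInner Y X := by
  rw [matInner, matInner, ← trace_transpose, transpose_mul, transpose_transpose]

lemma matInner_sub_left (X Y Z : Matrix m n ℝ) :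
    matInner (X - Y) Z = matInner X Z - matInner Y Z := by
  simp only [matInner, transpose_sub, Matrix.sub_mul, trace_sub]

lemma matInner_sub_right (X Y Z : Matrix m n ℝ) :
    matInner X (Y - Z) = matInner X Y - matInner X Z := by
  simp only [matInner, Matrix.mul_sub, trace_sub]

lemma matInner_smul_left (c : ℝ) (X Y : Matrix m n ℝ) :
    matInner (c • X) Y = c * matInner X Y := by
  simp only [matInner, transpose_smul, Matrix.smul_mul, trace_smul, smul_eq_mul]

lemma matInner_self_nonneg (X : Matrix m n ℝ) : 0 ≤ matInner X X := by
  simpa [matInner] using (posSemidef_conjTranspose_mul_self X).trace_nonneg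

lemma frobNorm_sq (X : Matrix m n ℝ) : frobNorm X ^ 2 = matInner X X :=
  Real.sq_sqrt (matInner_self_nonneg X)

lemma matInner_sub_sub_self {X Y : Matrix m n ℝ} (h : matInner X X = matInner Y Y) :
    matInner (X - Y) (X - Y) = 2 * matInner X (X - Y) := by
  simp only [matInner_sub_left, matInner_sub_right, matInner_comm Y X]
  linarith

lemma matInner_mul_mul_transpose (A : Matrix m k ℝ) (P : Matrix k k ℝ) (B : Matrix n k ℝ)
    (Z : Matrix m n ℝ) : matInner (A * P * Bᵀ) Z = (Pᵀ * (Aᵀ * Z * B)).trace := by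
  rw [matInner, transpose_mul, transpose_mul, transpose_transpose, Matrix.mul_assoc,
    Matrix.mul_assoc, trace_mul_comm]
  simp only [Matrix.mul_assoc]

lemma transpose_mul_mul_cancel {l : Type*} [DecidableEq k] {X : Matrix m k ℝ}
    (hX : Xᵀ * X = 1) (Y : Matrix k l ℝ) : Xᵀ * (X * Y) = Y := by
  rw [← Matrix.mul_assoc, hX, Matrix.one_mul]

section Orthonormal

variable [DecidableEq k] {A E : Matrix m k ℝ} {B F : Matrix n k ℝ}

lemma matInner_mul_transpose_self (hA : Aᵀ * A = 1) (hB : Bᵀ * B = 1) :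
    matInner (A * Bᵀ) (A * Bᵀ) = Fintype.card k := by
  rw [matInner, transpose_mul, transpose_transpose, Matrix.mul_assoc, ← Matrix.mul_assoc Aᵀ, hA,
    Matrix.one_mul, trace_mul_comm, hB, trace_one]

lemma transpose_mul_sub_mul_mul (hA : Aᵀ * A = 1) (hB : Bᵀ * B = 1) :
    Aᵀ * (A * Bᵀ - E * Fᵀ) * B = 1 - Aᵀ * E * (Fᵀ * B) := by
  simp only [Matrix.mul_sub, Matrix.sub_mul, ← Matrix.mul_assoc, hA, Matrix.one_mul]
  simp only [Matrix.mul_assoc, hB]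

lemma add_transpose_eq_gram (hA : Aᵀ * A = 1) (hB : Bᵀ * B = 1) (hE : Eᵀ * E = 1)
    (hF : Fᵀ * F = 1) :
    (1 - Aᵀ * E * (Fᵀ * B)) + (1 - Aᵀ * E * (Fᵀ * B))ᵀ =
      (A - E * (Fᵀ * B))ᵀ * (A - E * (Fᵀ * B)) + (B - F * (Fᵀ * B))ᵀ * (B - F * (Fᵀ * B)) := by
  simp only [transpose_sub, transpose_mul, transpose_transpose, transpose_one,
    Matrix.mul_sub, Matrix.sub_mul, Matrix.mul_assoc, hA, hB, transpose_mul_mul_cancel hE,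
    transpose_mul_mul_cancel hF]
  abel

lemma matInner_mul_mul_transpose_sub_nonneg {P : Matrix k k ℝ} (hP : P.PosSemidef)
    (hA : Aᵀ * A = 1) (hB : Bᵀ * B = 1) (hE : Eᵀ * E = 1) (hF : Fᵀ * F = 1) :
    0 ≤ matInner (A * P * Bᵀ) (A * Bᵀ - E * Fᵀ) := by
  have hPsymm : P.IsSymm := by simpa using hP.isHermitian
  rw [matInner_mul_mul_transpose, transpose_mul_sub_mul_mul hA hB, hPsymm.eq]
  have hsum := hPsymm.two_mul_trace_mul (1 - Aᵀ * E * (Fᵀ * B))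
  rw [add_transpose_eq_gram hA hB hE hF, Matrix.mul_add, trace_add] at hsum
  linarith [hP.trace_mul_transpose_mul_self_nonneg (A - E * (Fᵀ * B)),
    hP.trace_mul_transpose_mul_self_nonneg (B - F * (Fᵀ * B))]

lemma matInner_mul_mul_transpose_sub_mono {P Q : Matrix k k ℝ} (hPQ : (Q - P).PosSemidef)
    (hA : Aᵀ * A = 1) (hB : Bᵀ * B = 1) (hE : Eᵀ * E = 1) (hF : Fᵀ * F = 1) :
    matInner (A * P * Bᵀ) (A * Bᵀ - E * Fᵀ) ≤ matInner (A * Q * Bᵀ) (A * Bᵀ - E * Fᵀ) := by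
  have := matInner_mul_mul_transpose_sub_nonneg hPQ hA hB hE hF
  rwa [Matrix.mul_sub, Matrix.sub_mul, matInner_sub_left, sub_nonneg] at this

end Orthonormal

/-- for a positive definite `M` with smallest eigenvalue `λ_d` and
largest eigenvalue `λ₁`, and `A, B, E, F` with `d` orthonormal columns,
`(λ_d/2) ‖ABᵀ - EFᵀ‖_F² ≤ ⟨A M Bᵀ, ABᵀ - EFᵀ⟩ ≤ (λ₁/2) ‖ABᵀ - EFᵀ‖_F²`. -/
theorem inner_AMB_sandwich {d p q : ℕ}
    (M : Matrix (Fin d) (Fin d) ℝ) (hM : M.PosDef)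
    (A E : Matrix (Fin p) (Fin d) ℝ) (B F : Matrix (Fin q) (Fin d) ℝ)
    (hA : Aᵀ * A = 1) (hB : Bᵀ * B = 1) (hE : Eᵀ * E = 1) (hF : Fᵀ * F = 1) :
    (⨅ i, hM.1.eigenvalues i) / 2 * (frobNorm (A * Bᵀ - E * Fᵀ)) ^ 2 ≤
      matInner (A * M * Bᵀ) (A * Bᵀ - E * Fᵀ) ∧
    matInner (A * M * Bᵀ) (A * Bᵀ - E * Fᵀ) ≤
      (⨆ i, hM.1.eigenvalues i) / 2 * (frobNorm (A * Bᵀ - E * Fᵀ)) ^ 2 := by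
  have hnorm : frobNorm (A * Bᵀ - E * Fᵀ) ^ 2 = 2 * matInner (A * Bᵀ) (A * Bᵀ - E * Fᵀ) := by
    rw [frobNorm_sq]
    exact matInner_sub_sub_self
      (by rw [matInner_mul_transpose_self hA hB, matInner_mul_transpose_self hE hF])
  have hscalar (c : ℝ) : c / 2 * frobNorm (A * Bᵀ - E * Fᵀ) ^ 2 =
      matInner (A * (c • (1 : Matrix (Fin d) (Fin d) ℝ)) * Bᵀ) (A * Bᵀ - E * Fᵀ) := by
    rw [hnorm, Matrix.mul_smul, Matrix.mul_one, Matrix.smul_mul, matInner_smul_left]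
    ring
  rw [hscalar, hscalar]
  constructor
  · refine matInner_mul_mul_transpose_sub_mono ?_ hA hB hE hF
    exact hM.1.posSemidef_sub_smul_one fun i ↦ ciInf_le (Finite.bddBelow_range _) i
  · refine matInner_mul_mul_transpose_sub_mono ?_ hA hB hE hF
    exact hM.1.posSemidef_smul_one_sub fun i ↦ le_ciSup (Finite.bddAbove_range _) i
end

section
/- Let $\boldsymbol{Z}$ be a $d$-dimensional random vector, $Y$ a random element, and let $\{S_h : h = 1,\ldots,H\}$ be a measurable partition of the range of $Y$ such that $\mathbb{P}(Y \in S_h) \le (1+\gamma)/H$ for all $h$, for some $\gamma > 0$. Suppose that for some $\tau > 1+\gamma$ and all unit vectors $\boldsymbol{\beta} \in \mathbb{S}^{d-1}$, $\frac{1}{H}\sum_{h=1}^H \mathrm{var}(\boldsymbol{\beta}^\top \mathbb{E}[\boldsymbol{Z}\mid Y] \mid Y \in S_h) \le \frac{1}{\tau}\mathrm{var}(\boldsymbol{\beta}^\top \mathbb{E}[\boldsymbol{Z}\mid Y])$. Let $W = \sum_{h=1}^H h\, \mathbf{1}_{Y \in S_h}$. Then for all unit vectors $\boldsymbol{\beta}$,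 $(1 - \frac{1+\gamma}{\tau})\,\mathrm{var}(\boldsymbol{\beta}^\top \mathbb{E}[\boldsymbol{Z}\mid Y]) \le \mathrm{var}(\boldsymbol{\beta}^\top \mathbb{E}[\boldsymbol{Z}\mid W])$. -/
/-!
Since `W` is a function of `Y`, the tower property gives `βᵀ E[Z | W] = E[f | W]` for
`f = βᵀ E[Z | Y]`. The σ-algebra of `W` is generated by the finite partition `{Y ∈ S h}`, on which
`E[f | W]` is the cell average of `f`, so the law of total variance reads
`var f = var E[f | W] + ∑ₕ P(Y ∈ S h) var(f | Y ∈ S h)`.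
The cell probabilities are at most `(1 + γ) / H`, so by the hypothesis on the averaged sliced
variances the last sum is at most `(1 + γ) / τ · var f`.
-/

open MeasureTheory ProbabilityTheory
open scoped RealInnerProductSpace

theorem integral_cond_eq_setAverage {Ω E : Type*} [MeasurableSpace Ω] [NormedAddCommGroup E]
    [NormedSpace ℝ E] (μ : Measure Ω) (f : Ω → E) (s : Set Ω) :
    ∫ x, f x ∂μ[|s] = ⨍ x in s, f x ∂μ := by
  rw [setAverage_eq', ProbabilityTheory.cond]

theorem measureReal_mul_variance_cond {Ω : Type*} [MeasurableSpace Ω] {μ : Measure Ω}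
    {X : Ω → ℝ} (hX : AEMeasurable X μ) {s : Set Ω} (hs : μ s ≠ ⊤) :
    μ.real s * Var[X; μ[|s]] = ∫ x in s, (X x - ⨍ y in s, X y ∂μ) ^ 2 ∂μ := by
  rw [variance_eq_integral (hX.mono_ac cond_absolutelyContinuous), integral_cond_eq_setAverage,
    integral_cond_eq_setAverage, ← smul_eq_mul, measure_smul_setAverage _ hs]

theorem inner_condExp_ae_eq_condExp_inner_condExp {Ω E : Type*} {m₀ m₁ m₂ : MeasurableSpace Ω}
    {μ : Measure[m₀] Ω} [NormedAddCommGroup E] [InnerProductSpace ℝ E] [CompleteSpace E]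
    (h₁₂ : m₁ ≤ m₂) (h₂ : m₂ ≤ m₀) [SigmaFinite (μ.trim h₂)] (Z : Ω → E) (β : E) :
    (fun ω => ⟪μ[Z | m₁] ω, β⟫) =ᵐ[μ] μ[fun ω => ⟪μ[Z | m₂] ω, β⟫ | m₁] := by
  filter_upwards [condExp_condExp_of_le h₁₂ h₂ (f := Z),
    (innerSL ℝ β).comp_condExp_comm (m := m₁) (integrable_condExp (m := m₂) (f := Z))]
    with ω htower hinner
  simpa [← htower, real_inner_comm, Function.comp_def] using hinner

theorem exists_preimage_singleton_eq {α ι : Type*} {S : ι → Set α}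
    (hdisj : Pairwise (Function.onFun Disjoint S)) (hcover : ⋃ i, S i = Set.univ) :
    ∃ w : α → ι, ∀ i, w ⁻¹' {i} = S i := by
  choose w hw using fun y => Set.mem_iUnion.1 (hcover ▸ Set.mem_univ y)
  exact ⟨w, fun i => Set.ext fun y =>
    ⟨fun h => h ▸ hw y, fun hy => hdisj.eq (Set.not_disjoint_iff.2 ⟨y, hw y, hy⟩)⟩⟩

section Fibers

variable {Ω ι E : Type*} [MeasurableSpace Ω] {μ : Measure Ω}
  [Fintype ι] [MeasurableSpace ι] [MeasurableSingletonClass ι] {w : Ω → ι}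
  [NormedAddCommGroup E] [NormedSpace ℝ E]

open scoped Classical in
theorem setIntegral_preimage_eq_sum (hw : Measurable w) {f : Ω → E} (hf : Integrable f μ)
    (t : Set ι) : ∫ ω in w ⁻¹' t, f ω ∂μ = ∑ i with i ∈ t, ∫ ω in w ⁻¹' {i}, f ω ∂μ := by
  rw [← integral_biUnion_finset _ (fun i _ => hw (measurableSet_singleton i))
    ((Set.pairwiseDisjoint_fiber w _).subset (Set.subset_univ _)) fun i _ => hf.integrableOn]
  simp [Set.biUnion_preimage_singleton]

theorem integral_eq_sum_setIntegral_preimage_singleton (hw : Measurable w) {f : Ω → E}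
    (hf : Integrable f μ) : ∫ ω, f ω ∂μ = ∑ i, ∫ ω in w ⁻¹' {i}, f ω ∂μ := by
  simpa using setIntegral_preimage_eq_sum hw hf Set.univ

theorem condExp_comap_ae_eq_setAverage [CompleteSpace E] [IsFiniteMeasure μ] (hw : Measurable w)
    {X : Ω → E} (hX : Integrable X μ) :
    μ[X | MeasurableSpace.comap w ‹_›] =ᵐ[μ] fun ω => ⨍ x in w ⁻¹' {w ω}, X x ∂μ := by
  set F : ι → E := fun i => ⨍ x in w ⁻¹' {i}, X x ∂μ
  have hF : StronglyMeasurable[MeasurableSpace.comap w ‹_›] (F ∘ w) :=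
    StronglyMeasurable.of_discrete.comp_measurable (comap_measurable w)
  have hFint : Integrable (F ∘ w) μ := Integrable.of_finite.comp_measurable hw
  refine (ae_eq_condExp_of_forall_setIntegral_eq hw.comap_le hX (fun _ _ _ => hFint.integrableOn)
    ?_ hF.aestronglyMeasurable).symm
  rintro _ ⟨t, -, rfl⟩ -
  rw [setIntegral_preimage_eq_sum hw hFint, setIntegral_preimage_eq_sum hw hX]
  refine Finset.sum_congr rfl fun i _ => ?_
  rw [setIntegral_congr_fun (hw (measurableSet_singleton i))
      fun ω (hω : w ω = i) => by rw [Function.comp_apply, hω],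
    setIntegral_const, measure_smul_setAverage _ (measure_ne_top _ _)]

theorem integral_condVar_comap_eq_sum [IsFiniteMeasure μ] (hw : Measurable w) {X : Ω → ℝ}
    (hX : MemLp X 2 μ) :
    μ[Var[X; μ | MeasurableSpace.comap w ‹_›]] =
      ∑ i, μ.real (w ⁻¹' {i}) * Var[X; μ[|w ⁻¹' {i}]] := by
  have hmean := condExp_comap_ae_eq_setAverage hw (hX.integrable one_le_two)
  have hint : Integrable (fun ω => (X ω - ⨍ x in w ⁻¹' {w ω}, X x ∂μ) ^ 2) μ :=
    (hX.sub (hX.condExp (m := MeasurableSpace.comap w ‹_›) one_le_two)).integrable_sq.congr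
      (by filter_upwards [hmean] with ω hω; simp [hω])
  calc μ[Var[X; μ | MeasurableSpace.comap w ‹_›]]
      = ∫ ω, (X ω - ⨍ x in w ⁻¹' {w ω}, X x ∂μ) ^ 2 ∂μ := by
        rw [condVar, integral_condExp hw.comap_le]
        exact integral_congr_ae (by filter_upwards [hmean] with ω hω; simp [hω])
    _ = ∑ i, ∫ ω in w ⁻¹' {i}, (X ω - ⨍ x in w ⁻¹' {i}, X x ∂μ) ^ 2 ∂μ := by
        rw [integral_eq_sum_setIntegral_preimage_singleton hw hint]
        exact Finset.sum_congr rfl fun i _ => setIntegral_congr_fun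
          (hw (measurableSet_singleton i)) fun ω (hω : w ω = i) => by rw [hω]
    _ = ∑ i, μ.real (w ⁻¹' {i}) * Var[X; μ[|w ⁻¹' {i}]] := by
        simp_rw [measureReal_mul_variance_cond hX.aestronglyMeasurable.aemeasurable
          (measure_ne_top _ _)]

theorem variance_condExp_comap_eq_sub [IsProbabilityMeasure μ] (hw : Measurable w) {X : Ω → ℝ}
    (hX : MemLp X 2 μ) :
    Var[μ[X | MeasurableSpace.comap w ‹_›]; μ] =
      Var[X; μ] - ∑ i, μ.real (w ⁻¹' {i}) * Var[X; μ[|w ⁻¹' {i}]] := by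
  rw [← integral_condVar_add_variance_condExp hw.comap_le hX, integral_condVar_comap_eq_sum hw hX,
    add_sub_cancel_left]

theorem sub_mul_sum_variance_cond_le_variance_condExp_comap [IsProbabilityMeasure μ]
    (hw : Measurable w) {X : Ω → ℝ} (hX : AEStronglyMeasurable X μ) {c : ℝ} (hc : 0 ≤ c)
    (hcell : ∀ i, μ.real (w ⁻¹' {i}) ≤ c) :
    Var[X; μ] - c * ∑ i, Var[X; μ[|w ⁻¹' {i}]] ≤ Var[μ[X | MeasurableSpace.comap w ‹_›]; μ] := by
  have hsum : 0 ≤ c * ∑ i, Var[X; μ[|w ⁻¹' {i}]] :=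
    mul_nonneg hc (Finset.sum_nonneg fun i _ => variance_nonneg _ _)
  by_cases hX2 : MemLp X 2 μ
  · rw [variance_condExp_comap_eq_sub hw hX2, Finset.mul_sum]
    gcongr with i
    exacts [variance_nonneg _ _, hcell i]
  · rw [variance_of_not_memLp hX hX2]
    linarith [variance_nonneg (μ[X | MeasurableSpace.comap w ‹_›]) μ]

end Fibers

theorem sliced_stability_discretization_general
    {Ω α : Type*} [MeasurableSpace Ω] [mα : MeasurableSpace α]
    (μ : Measure Ω) [IsProbabilityMeasure μ]
    {d H : ℕ}
    (Z : Ω → EuclideanSpace ℝ (Fin d)) (Y : Ω → α)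
    (hY : Measurable Y)
    (S : Fin H → Set α) (hSmeas : ∀ h, MeasurableSet (S h))
    (hSdisj : Pairwise (Function.onFun Disjoint S))
    (hScover : (⋃ h, S h) = Set.univ)
    (γ τ : ℝ) (hγ : 0 < γ)
    (hslice : ∀ h, μ (Y ⁻¹' S h) ≤ ENNReal.ofReal ((1 + γ) / H))
    (W : Ω → ℕ)
    (hW : ∀ ω, (W ω : ℝ) = ∑ h : Fin H, (h : ℕ) * Set.indicator (S h) (fun _ => (1 : ℝ)) (Y ω))
    (hvar : ∀ β : EuclideanSpace ℝ (Fin d), ‖β‖ = 1 →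
      (1 / H : ℝ) * ∑ h : Fin H,
          variance (fun ω => ⟪(μ[Z | MeasurableSpace.comap Y mα]) ω, β⟫)
            (μ[|Y ⁻¹' S h]) ≤
        (1 / τ) *
          variance (fun ω => ⟪(μ[Z | MeasurableSpace.comap Y mα]) ω, β⟫) μ) :
    ∀ β : EuclideanSpace ℝ (Fin d), ‖β‖ = 1 →
      (1 - (1 + γ) / τ) *
          variance (fun ω => ⟪(μ[Z | MeasurableSpace.comap Y mα]) ω, β⟫) μ ≤
        variance (fun ω =>
          ⟪(μ[Z | MeasurableSpace.comap W inferInstance]) ω, β⟫) μ := by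
  intro β hβ
  obtain ⟨w, hw⟩ := exists_preimage_singleton_eq hSdisj hScover
  have hw_meas : Measurable w := measurable_to_countable' fun h => hw h ▸ hSmeas h
  have hW_eq : W = Fin.val ∘ w ∘ Y := funext fun ω => by
    have : (W ω : ℝ) = (w (Y ω) : ℕ) := (hW ω).trans (by classical simp [← hw, Set.indicator_apply])
    exact_mod_cast this
  have hcomap :
      MeasurableSpace.comap W inferInstance = MeasurableSpace.comap (w ∘ Y) inferInstance := by
    rw [hW_eq, ← MeasurableSpace.comap_comp,
      (MeasurableEmbedding.mk Fin.val_injective .of_discrete fun _ _ => .of_discrete).comap_eq]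
  set f := fun ω => ⟪(μ[Z | MeasurableSpace.comap Y mα]) ω, β⟫
  have hf_meas : AEStronglyMeasurable f μ :=
    (stronglyMeasurable_condExp.mono hY.comap_le).aestronglyMeasurable.inner
      aestronglyMeasurable_const
  have hcell (h : Fin H) : (w ∘ Y) ⁻¹' {h} = Y ⁻¹' S h := by rw [Set.preimage_comp, hw]
  have htotal := sub_mul_sum_variance_cond_le_variance_condExp_comap (hw_meas.comp hY) hf_meas
    (c := (1 + γ) / H) (by positivity)
    fun h => hcell h ▸ ENNReal.toReal_le_of_le_ofReal (by positivity) (hslice h)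
  rw [hcomap, variance_congr (inner_condExp_ae_eq_condExp_inner_condExp
    (MeasurableSpace.comap_comp.symm.trans_le (MeasurableSpace.comap_mono hw_meas.comap_le))
    hY.comap_le Z β)]
  simp_rw [hcell] at htotal
  calc (1 - (1 + γ) / τ) * Var[f; μ] = Var[f; μ] - (1 + γ) * (1 / τ * Var[f; μ]) := by ring
    _ ≤ Var[f; μ] - (1 + γ) * (1 / H * ∑ h, Var[f; μ[|Y ⁻¹' S h]]) := by
        gcongr Var[f; μ] - (1 + γ) * ?_
        exact hvar β hβ
    _ = Var[f; μ] - (1 + γ) / H * ∑ h, Var[f; μ[|Y ⁻¹' S h]] := by ring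
    _ ≤ _ := htotal

/-- discretization preserves most of the variance of the central curve.
If `{S h}` is a partition with `P(Y ∈ S h) ≤ (1+γ)/H` and the average sliced conditional
variance of `βᵀE[Z|Y]` is at most `(1/τ) var(βᵀE[Z|Y])` for all unit `β`, then, with
`W = Σ_h h 1_{Y ∈ S h}`, one has
`(1 - (1+γ)/τ) var(βᵀE[Z|Y]) ≤ var(βᵀE[Z|W])` for all unit `β`. -/
theorem sliced_stability_discretization
    {Ω α : Type*} [MeasurableSpace Ω] [mα : MeasurableSpace α]
    (μ : Measure Ω) [IsProbabilityMeasure μ]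
    {d H : ℕ} (hH : 0 < H)
    (Z : Ω → EuclideanSpace ℝ (Fin d)) (Y : Ω → α)
    (hY : Measurable Y) (hZ : Integrable Z μ)
    (S : Fin H → Set α) (hSmeas : ∀ h, MeasurableSet (S h))
    (hSdisj : Pairwise (Function.onFun Disjoint S))
    (hScover : (⋃ h, S h) = Set.univ)
    (γ τ : ℝ) (hγ : 0 < γ) (hτ : 1 + γ < τ)
    (hslice : ∀ h, μ (Y ⁻¹' S h) ≤ ENNReal.ofReal ((1 + γ) / H))
    (W : Ω → ℕ)
    (hW : ∀ ω, (W ω : ℝ) = ∑ h : Fin H, (h : ℕ) * Set.indicator (S h) (fun _ => (1 : ℝ)) (Y ω))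
    (hvar : ∀ β : EuclideanSpace ℝ (Fin d), ‖β‖ = 1 →
      (1 / H : ℝ) * ∑ h : Fin H,
          variance (fun ω => ⟪(μ[Z | MeasurableSpace.comap Y mα]) ω, β⟫)
            (μ[|Y ⁻¹' S h]) ≤
        (1 / τ) *
          variance (fun ω => ⟪(μ[Z | MeasurableSpace.comap Y mα]) ω, β⟫) μ) :
    ∀ β : EuclideanSpace ℝ (Fin d), ‖β‖ = 1 →
      (1 - (1 + γ) / τ) *
          variance (fun ω => ⟪(μ[Z | MeasurableSpace.comap Y mα]) ω, β⟫) μ ≤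
        variance (fun ω =>
          ⟪(μ[Z | MeasurableSpace.comap W inferInstance]) ω, β⟫) μ :=
  sliced_stability_discretization_general (mα := mα) μ Z Y hY S hSmeas hSdisj hScover γ τ hγ hslice
    W hW hvar
end

section
/- Suppose the distribution of the random vector $\boldsymbol{Z} \in \mathbb{R}^d$ is invariant under orthogonal transformations, and $W$ is a discrete random variable on the same probability space. Then for any $w$ in the support of $W$ and any real number $\theta$, $\|\mathbb{E}[\boldsymbol{Z}\, \mathbf{1}_{W=w}]\| \le \theta\, \mathbb{P}(W=w) + \mathbb{E}[(Z_1 - \theta)_+]$, where $Z_1$ is the first coordinate of $\boldsymbol{Z}$ and $x_+ = \max(x,0)$. -/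
/-! For a unit vector `u` with `⟪u, E[Z 1_{W=w}]⟫ = ‖E[Z 1_{W=w}]‖`, bound
`⟪u, Z⟫ ≤ θ + (⟪u, Z⟫ - θ)₊` and integrate over `{W = w}`. Some orthogonal matrix maps `u` to the
first basis vector, so by rotation invariance `⟪u, Z⟫` has the law of `Z₁`, and
`E[(⟪u, Z⟫ - θ)₊] = E[(Z₁ - θ)₊]`. -/

open MeasureTheory ProbabilityTheory Matrix
open scoped RealInnerProductSpace

theorem setIntegral_le_mul_measureReal_add_integral_max_sub {Ω : Type*} [MeasurableSpace Ω]
    {μ : Measure Ω} [IsFiniteMeasure μ] {f : Ω → ℝ} (hf : Integrable f μ) (s : Set Ω) (θ : ℝ) :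
    ∫ ω in s, f ω ∂μ ≤ θ * μ.real s + ∫ ω, max (f ω - θ) 0 ∂μ := by
  have hpos : Integrable (fun ω => max (f ω - θ) 0) μ := (hf.sub (integrable_const θ)).pos_part
  calc ∫ ω in s, f ω ∂μ ≤ ∫ ω in s, (θ + max (f ω - θ) 0) ∂μ :=
        integral_mono hf.restrict ((integrable_const θ).add hpos.restrict)
          fun ω => by linarith [le_max_left (f ω - θ) 0]
    _ = θ * μ.real s + ∫ ω in s, max (f ω - θ) 0 ∂μ := by
        rw [integral_add (integrable_const θ) hpos.restrict, setIntegral_const, smul_eq_mul,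
          mul_comm]
    _ ≤ θ * μ.real s + ∫ ω, max (f ω - θ) 0 ∂μ :=
        add_le_add_right (setIntegral_le_integral hpos (.of_forall fun ω => le_max_right _ _)) _

theorem exists_norm_eq_one_inner_eq_norm {E : Type*} [NormedAddCommGroup E]
    [InnerProductSpace ℝ E] [CompleteSpace E] [Nontrivial E] (v : E) :
    ∃ u : E, ‖u‖ = 1 ∧ ⟪u, v⟫ = ‖v‖ := by
  obtain ⟨g, hg, hgv⟩ := exists_dual_vector' ℝ v
  exact ⟨(InnerProductSpace.toDual ℝ E).symm g, by simpa using hg,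
    by rw [InnerProductSpace.toDual_symm_apply, hgv]; rfl⟩

theorem exists_mem_orthogonalGroup_mulVec_apply_eq_inner {ι : Type*} [Fintype ι] [DecidableEq ι]
    (i₀ : ι) {u : EuclideanSpace ℝ ι} (hu : ‖u‖ = 1) :
    ∃ V ∈ orthogonalGroup ι ℝ, ∀ x : EuclideanSpace ℝ ι, (V *ᵥ x) i₀ = ⟪u, x⟫ := by
  have hu_orth : Orthonormal ℝ (({i₀} : Set ι).domRestrict fun _ => u) :=
    ⟨fun _ => hu, fun i j hij => absurd (Subtype.ext (i.2.trans j.2.symm)) hij⟩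
  -- `V` has as rows an orthonormal basis whose `i₀`-th vector is `u`.
  obtain ⟨b, hb⟩ := hu_orth.exists_orthonormalBasis_extension_of_card_eq (by simp)
  refine ⟨b.toBasis.toMatrix (EuclideanSpace.basisFun ι ℝ),
    b.toMatrix_orthonormalBasis_mem_orthogonal _, fun x => ?_⟩
  calc _ = b.repr x i₀ :=
        congrFun ((EuclideanSpace.basisFun ι ℝ).toBasis.toMatrix_mulVec_repr b.toBasis x) i₀
    _ = ⟪u, x⟫ := by rw [b.repr_apply_apply, hb i₀ rfl]

section RotationInvariance

variable {Ω ι : Type*} [MeasurableSpace Ω] [Fintype ι] [DecidableEq ι]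

def HasRotationInvariantLaw (μ : Measure Ω) (Z : Ω → EuclideanSpace ℝ ι) : Prop :=
  ∀ V ∈ orthogonalGroup ι ℝ,
    μ.map (fun ω => (WithLp.equiv 2 (ι → ℝ)).symm (V *ᵥ Z ω)) = μ.map Z

variable {μ : Measure Ω} {Z : Ω → EuclideanSpace ℝ ι}

theorem HasRotationInvariantLaw.identDistrib_inner (hinv : HasRotationInvariantLaw μ Z)
    (hZ : AEMeasurable Z μ) (i₀ : ι) {u : EuclideanSpace ℝ ι} (hu : ‖u‖ = 1) :
    IdentDistrib (fun ω => ⟪u, Z ω⟫) (fun ω => Z ω i₀) μ μ := by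
  obtain ⟨V, hV, hVu⟩ := exists_mem_orthogonalGroup_mulVec_apply_eq_inner i₀ hu
  have hrot : IdentDistrib (fun ω => (WithLp.equiv 2 (ι → ℝ)).symm (V *ᵥ Z ω)) Z μ μ :=
    ⟨(toEuclideanCLM (𝕜 := ℝ) V).continuous.measurable.comp_aemeasurable hZ, hZ, hinv V hV⟩
  simpa [Function.comp_def, hVu] using
    hrot.comp ((measurable_pi_apply i₀).comp (WithLp.measurable_ofLp 2 _))

theorem HasRotationInvariantLaw.norm_setIntegral_le [IsFiniteMeasure μ]
    (hinv : HasRotationInvariantLaw μ Z) (hZ : Integrable Z μ) (i₀ : ι) (s : Set Ω) (θ : ℝ) :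
    ‖∫ ω in s, Z ω ∂μ‖ ≤ θ * μ.real s + ∫ ω, max (Z ω i₀ - θ) 0 ∂μ := by
  have : Nonempty ι := ⟨i₀⟩
  obtain ⟨u, hu, huv⟩ := exists_norm_eq_one_inner_eq_norm (∫ ω in s, Z ω ∂μ)
  have hproj : IdentDistrib (fun ω => max (⟪u, Z ω⟫ - θ) 0) (fun ω => max (Z ω i₀ - θ) 0) μ μ :=
    (hinv.identDistrib_inner hZ.aemeasurable i₀ hu).comp
      ((measurable_id.sub_const θ).max measurable_const)
  calc ‖∫ ω in s, Z ω ∂μ‖ = ∫ ω in s, ⟪u, Z ω⟫ ∂μ := by rw [← huv, integral_inner hZ.restrict]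
    _ ≤ θ * μ.real s + ∫ ω, max (⟪u, Z ω⟫ - θ) 0 ∂μ :=
        setIntegral_le_mul_measureReal_add_integral_max_sub (hZ.const_inner u) s θ
    _ = θ * μ.real s + ∫ ω, max (Z ω i₀ - θ) 0 ∂μ := by rw [hproj.integral_eq]

end RotationInvariance

theorem norm_integral_indicator_le_of_rotation_invariant_general
    {Ω : Type*} [MeasurableSpace Ω] (μ : Measure Ω) [IsProbabilityMeasure μ]
    {d : ℕ} (hd : 0 < d)
    (Z : Ω → EuclideanSpace ℝ (Fin d))
    (hZint : Integrable Z μ)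
    (hinv : ∀ V ∈ Matrix.orthogonalGroup (Fin d) ℝ,
      Measure.map (fun ω => (WithLp.equiv 2 (Fin d → ℝ)).symm
        ((V : Matrix (Fin d) (Fin d) ℝ).mulVec (Z ω))) μ = Measure.map Z μ)
    (W : Ω → ℕ) :
    ∀ w : ℕ, μ (W ⁻¹' {w}) ≠ 0 → ∀ θ : ℝ,
      ‖∫ ω in W ⁻¹' {w}, Z ω ∂μ‖ ≤
        θ * (μ (W ⁻¹' {w})).toReal + ∫ ω, max (Z ω ⟨0, hd⟩ - θ) 0 ∂μ :=
  fun w _ θ => HasRotationInvariantLaw.norm_setIntegral_le hinv hZint ⟨0, hd⟩ (W ⁻¹' {w}) θ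

/-- if the law of `Z` is invariant under orthogonal transformations and
`W` is a discrete random variable, then for any `w` in the support of `W` and any `θ`,
`‖E[Z 1_{W=w}]‖ ≤ θ P(W=w) + E[(Z₁ - θ)₊]`. -/
theorem norm_integral_indicator_le_of_rotation_invariant
    {Ω : Type*} [MeasurableSpace Ω] (μ : Measure Ω) [IsProbabilityMeasure μ]
    {d : ℕ} (hd : 0 < d)
    (Z : Ω → EuclideanSpace ℝ (Fin d)) (hZmeas : Measurable Z)
    (hZint : Integrable Z μ)
    (hinv : ∀ V ∈ Matrix.orthogonalGroup (Fin d) ℝ,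
      Measure.map (fun ω => (WithLp.equiv 2 (Fin d → ℝ)).symm
        ((V : Matrix (Fin d) (Fin d) ℝ).mulVec (Z ω))) μ = Measure.map Z μ)
    (W : Ω → ℕ) (hWmeas : Measurable W) :
    ∀ w : ℕ, μ (W ⁻¹' {w}) ≠ 0 → ∀ θ : ℝ,
      ‖∫ ω in W ⁻¹' {w}, Z ω ∂μ‖ ≤
        θ * (μ (W ⁻¹' {w})).toReal + ∫ ω, max (Z ω ⟨0, hd⟩ - θ) 0 ∂μ :=
  norm_integral_indicator_le_of_rotation_invariant_general μ hd Z hZint hinv W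
end

section
/- If $Z \sim N(0,1)$ and $\theta > 0$, then $(\mathbb{E}[Z \mid Z > \theta])^2 \le 37 \log\frac{1}{\mathbb{P}(Z > \theta)}$. -/
/-!
Write `φ` for the standard normal density and `Q θ = P(Z > θ)`. Since `φ' x = -x φ x`, the
numerator `E[Z 1_{Z > θ}]` equals `φ θ`, and `-(x / (x² + 1)) φ x` has derivative
`(1 - 2 / (x² + 1)²) φ x ≤ φ x`, which gives Mills' lower bound `Q θ ≥ θ / (θ² + 1) φ θ`.
For `θ ≥ 1` the conditional mean is therefore at most `θ + θ⁻¹ ≤ 2θ`, while the Chernoff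
bound `Q θ ≤ exp (-θ² / 2)` gives `log (1 / Q θ) ≥ θ² / 2`. For `θ < 1` the conditional mean
is at most `φ 0 / Q 1 ≤ 2 exp (1 / 2)`, and `Q θ ≤ Q 0 = 1 / 2` gives
`log (1 / Q θ) ≥ log 2`; finally `4e ≤ 37 log 2`.
-/

open MeasureTheory ProbabilityTheory Real Set Filter Topology
open scoped NNReal

lemma setIntegral_gaussianReal_eq_setIntegral_mul {μ : ℝ} {v : ℝ≥0} (hv : v ≠ 0)
    (s : Set ℝ) (f : ℝ → ℝ) :
    ∫ x in s, f x ∂gaussianReal μ v = ∫ x in s, gaussianPDFReal μ v x * f x := by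
  rw [gaussianReal_of_var_ne_zero μ hv, setIntegral_withDensity_eq_setIntegral_toReal_smul₀' s
    (measurable_gaussianPDF μ v).aemeasurable (ae_of_all _ fun _ ↦ gaussianPDF_lt_top)]
  simp only [toReal_gaussianPDF, smul_eq_mul]

lemma measureReal_gaussianReal {μ : ℝ} {v : ℝ≥0} (hv : v ≠ 0) (s : Set ℝ) :
    (gaussianReal μ v).real s = ∫ x in s, gaussianPDFReal μ v x := by
  rw [measureReal_def, gaussianReal_apply_eq_integral μ hv,
    ENNReal.toReal_ofReal (integral_nonneg (gaussianPDFReal_nonneg μ v))]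

lemma hasSubgaussianMGF_id_gaussianReal (v : ℝ≥0) :
    HasSubgaussianMGF id v (gaussianReal 0 v) :=
  ⟨integrable_exp_mul_gaussianReal, fun t ↦ by simp [mgf_id_gaussianReal]⟩

local notation "φ" => gaussianPDFReal 0 1

lemma gaussianPDFReal_zero_one : φ = fun x ↦ (√(2 * π))⁻¹ * exp (-x ^ 2 / 2) := by
  ext; simp [gaussianPDFReal]

lemma hasDerivAt_gaussianPDFReal_zero_one (x : ℝ) : HasDerivAt φ (-x * φ x) x := by
  have h : HasDerivAt (fun y : ℝ ↦ -y ^ 2 / 2) (-x) x :=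
    ((hasDerivAt_pow 2 x).fun_neg.div_const 2).congr_deriv (by ring)
  rw [gaussianPDFReal_zero_one]
  exact (h.exp.const_mul _).congr_deriv (by ring)

lemma tendsto_gaussianPDFReal_zero_one_atTop : Tendsto φ atTop (𝓝 0) := by
  have h : Tendsto (fun x : ℝ ↦ -x ^ 2 / 2) atTop atBot :=
    (tendsto_neg_atBot_iff.mpr (tendsto_pow_atTop two_ne_zero)).atBot_div_const two_pos
  simpa [gaussianPDFReal_zero_one] using (tendsto_exp_atBot.comp h).const_mul (√(2 * π))⁻¹

lemma gaussianPDFReal_zero_one_le_zero (x : ℝ) : φ x ≤ φ 0 := by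
  simp only [gaussianPDFReal_zero_one]
  gcongr _ * exp ?_
  nlinarith [sq_nonneg x]

lemma gaussianPDFReal_zero_one_zero : φ 0 = exp (1 / 2) * φ 1 := by
  simp only [gaussianPDFReal_zero_one, mul_left_comm (exp _), ← exp_add]
  norm_num

lemma integrable_mul_gaussianPDFReal_zero_one : Integrable fun x ↦ x * φ x := by
  convert (integrable_mul_exp_neg_mul_sq (b := 1 / 2) (by norm_num)).const_mul (√(2 * π))⁻¹
    using 2 with x
  simp only [gaussianPDFReal_zero_one]; ring_nf

lemma setIntegral_Ioi_id_gaussianReal (θ : ℝ) : ∫ x in Ioi θ, x ∂gaussianReal 0 1 = φ θ := by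
  have h := integral_Ioi_of_hasDerivAt_of_tendsto' (a := θ) (f := fun x ↦ -φ x)
    (fun x _ ↦ (hasDerivAt_gaussianPDFReal_zero_one x).neg)
    (integrable_mul_gaussianPDFReal_zero_one.integrableOn.congr_fun (fun x _ ↦ by ring)
      measurableSet_Ioi)
    (by simpa using tendsto_gaussianPDFReal_zero_one_atTop.neg)
  rw [setIntegral_gaussianReal_eq_setIntegral_mul one_ne_zero]
  simpa [mul_comm] using h

lemma hasDerivAt_div_sq_add_one_mul_gaussianPDFReal (x : ℝ) :
    HasDerivAt (fun y ↦ y / (y ^ 2 + 1) * φ y) ((2 / (x ^ 2 + 1) ^ 2 - 1) * φ x) x := by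
  have hq : HasDerivAt (fun y : ℝ ↦ y / (y ^ 2 + 1)) ((1 - x ^ 2) / (x ^ 2 + 1) ^ 2) x := by
    refine ((hasDerivAt_id x).div ((hasDerivAt_pow 2 x).add_const 1)
      (by positivity)).congr_deriv ?_
    simp only [id]; ring
  refine (hq.mul (hasDerivAt_gaussianPDFReal_zero_one x)).congr_deriv ?_
  field_simp
  ring

lemma mul_gaussianPDFReal_le_measureReal_Ioi (θ : ℝ) :
    θ / (θ ^ 2 + 1) * φ θ ≤ (gaussianReal 0 1).real (Ioi θ) := by
  set g : ℝ → ℝ := fun x ↦ (1 - 2 / (x ^ 2 + 1) ^ 2) * φ x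
  have hg : Integrable g := by
    refine (integrable_gaussianPDFReal 0 1).bdd_mul (c := 1)
      (Continuous.aestronglyMeasurable (by fun_prop (disch := intro x; positivity)))
      (ae_of_all _ fun x ↦ ?_)
    have : 2 / (x ^ 2 + 1) ^ 2 ≤ 2 := div_le_self zero_le_two (one_le_pow₀ (by nlinarith))
    rw [Real.norm_eq_abs, abs_le]
    constructor <;> nlinarith [div_nonneg zero_le_two (sq_nonneg (x ^ 2 + 1))]
  have hlim : Tendsto (fun x ↦ -(x / (x ^ 2 + 1) * φ x)) atTop (𝓝 0) := by
    suffices h : Tendsto (fun x ↦ x / (x ^ 2 + 1) * φ x) atTop (𝓝 0) by simpa using h.neg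
    refine squeeze_zero' ?_ ?_ tendsto_gaussianPDFReal_zero_one_atTop
    · filter_upwards [eventually_ge_atTop 0] with x hx
      exact mul_nonneg (by positivity) (gaussianPDFReal_nonneg 0 1 x)
    · filter_upwards [eventually_ge_atTop 0] with x hx
      refine mul_le_of_le_one_left (gaussianPDFReal_nonneg 0 1 x) ?_
      rw [div_le_one (by positivity)]
      nlinarith
  have hftc := integral_Ioi_of_hasDerivAt_of_tendsto' (a := θ)
    (fun x _ ↦ (hasDerivAt_div_sq_add_one_mul_gaussianPDFReal x).fun_neg.congr_deriv (by ring))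
    hg.integrableOn hlim
  calc θ / (θ ^ 2 + 1) * φ θ = ∫ x in Ioi θ, g x := by rw [hftc]; ring
    _ ≤ ∫ x in Ioi θ, φ x := by
      refine setIntegral_mono hg.integrableOn (integrable_gaussianPDFReal 0 1).integrableOn
        fun x ↦ mul_le_of_le_one_left (gaussianPDFReal_nonneg 0 1 x) ?_
      linarith [div_nonneg zero_le_two (sq_nonneg (x ^ 2 + 1))]
    _ = (gaussianReal 0 1).real (Ioi θ) := (measureReal_gaussianReal one_ne_zero _).symm

lemma measureReal_gaussianReal_Ioi_pos {θ : ℝ} (hθ : 0 < θ) :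
    0 < (gaussianReal 0 1).real (Ioi θ) :=
  (mul_pos (by positivity) (gaussianPDFReal_pos 0 1 θ one_ne_zero)).trans_le
    (mul_gaussianPDFReal_le_measureReal_Ioi θ)

lemma measureReal_gaussianReal_Ioi_le_exp {θ : ℝ} (hθ : 0 ≤ θ) :
    (gaussianReal 0 1).real (Ioi θ) ≤ exp (-θ ^ 2 / 2) :=
  calc (gaussianReal 0 1).real (Ioi θ) ≤ (gaussianReal 0 1).real {x | θ ≤ id x} :=
        measureReal_mono fun _ hx ↦ le_of_lt (mem_Ioi.mp hx)
    _ ≤ exp (-θ ^ 2 / 2) := by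
      simpa using (hasSubgaussianMGF_id_gaussianReal 1).measure_ge_le hθ

lemma measureReal_gaussianReal_Ioi_zero : (gaussianReal 0 1).real (Ioi 0) = 1 / 2 := by
  have h : ∫ x in Ioi (0 : ℝ), exp (-x ^ 2 / 2) = √(2 * π) / 2 := by
    convert integral_gaussian_Ioi (1 / 2) using 3 with x
    · ring_nf
    · field_simp
  rw [measureReal_gaussianReal one_ne_zero, gaussianPDFReal_zero_one, integral_const_mul, h]
  field_simp

lemma gaussianPDFReal_div_measureReal_Ioi_le {θ : ℝ} (hθ : 0 < θ) :
    φ θ / (gaussianReal 0 1).real (Ioi θ) ≤ θ + θ⁻¹ := by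
  rw [div_le_iff₀ (measureReal_gaussianReal_Ioi_pos hθ)]
  calc φ θ = (θ + θ⁻¹) * (θ / (θ ^ 2 + 1) * φ θ) := by field_simp
    _ ≤ (θ + θ⁻¹) * (gaussianReal 0 1).real (Ioi θ) := by
      gcongr; exact mul_gaussianPDFReal_le_measureReal_Ioi θ

lemma gaussianPDFReal_div_measureReal_Ioi_le_of_le_one {θ : ℝ} (hθ : 0 < θ) (hθ₁ : θ ≤ 1) :
    φ θ / (gaussianReal 0 1).real (Ioi θ) ≤ 2 * exp (1 / 2) := by
  rw [div_le_iff₀ (measureReal_gaussianReal_Ioi_pos hθ)]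
  have hQ : φ 1 / 2 ≤ (gaussianReal 0 1).real (Ioi θ) := by
    calc φ 1 / 2 = 1 / (1 ^ 2 + 1) * φ 1 := by ring
      _ ≤ (gaussianReal 0 1).real (Ioi 1) := mul_gaussianPDFReal_le_measureReal_Ioi 1
      _ ≤ (gaussianReal 0 1).real (Ioi θ) := measureReal_mono (Ioi_subset_Ioi hθ₁)
  calc φ θ ≤ φ 0 := gaussianPDFReal_zero_one_le_zero θ
    _ = 2 * exp (1 / 2) * (φ 1 / 2) := by rw [gaussianPDFReal_zero_one_zero]; ring
    _ ≤ 2 * exp (1 / 2) * (gaussianReal 0 1).real (Ioi θ) := by gcongr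

lemma sq_div_two_le_log_one_div_measureReal_Ioi {θ : ℝ} (hθ : 0 < θ) :
    θ ^ 2 / 2 ≤ log (1 / (gaussianReal 0 1).real (Ioi θ)) := by
  rw [one_div, log_inv, le_neg, ← neg_div, ← log_exp (-θ ^ 2 / 2)]
  exact log_le_log (measureReal_gaussianReal_Ioi_pos hθ)
    (measureReal_gaussianReal_Ioi_le_exp hθ.le)

lemma log_two_le_log_one_div_measureReal_Ioi {θ : ℝ} (hθ : 0 < θ) :
    log 2 ≤ log (1 / (gaussianReal 0 1).real (Ioi θ)) := by
  refine log_le_log two_pos ?_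
  rw [le_one_div two_pos (measureReal_gaussianReal_Ioi_pos hθ), ← measureReal_gaussianReal_Ioi_zero]
  exact measureReal_mono (Ioi_subset_Ioi hθ.le)

/-- if `Z ∼ N(0,1)` and `θ > 0`, then
`(E[Z ∣ Z > θ])² ≤ 37 log(1 / P(Z > θ))`. -/
theorem sq_condexp_tail_le {θ : ℝ} (hθ : 0 < θ) :
    ((∫ z in Set.Ioi θ, z ∂(gaussianReal 0 1)) /
        ((gaussianReal 0 1) (Set.Ioi θ)).toReal) ^ 2 ≤
      37 * Real.log (1 / ((gaussianReal 0 1) (Set.Ioi θ)).toReal) := by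
  rw [← measureReal_def, setIntegral_Ioi_id_gaussianReal]
  have hratio : 0 ≤ φ θ / (gaussianReal 0 1).real (Ioi θ) :=
    div_nonneg (gaussianPDFReal_nonneg 0 1 θ) (measureReal_gaussianReal_Ioi_pos hθ).le
  rcases le_or_gt 1 θ with hθ₁ | hθ₁
  · have hinv : θ⁻¹ ≤ θ := (inv_le_one_of_one_le₀ hθ₁).trans hθ₁
    calc (φ θ / (gaussianReal 0 1).real (Ioi θ)) ^ 2 ≤ (θ + θ⁻¹) ^ 2 :=
          pow_le_pow_left₀ hratio (gaussianPDFReal_div_measureReal_Ioi_le hθ) 2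
      _ ≤ 37 * (θ ^ 2 / 2) := by nlinarith [inv_pos.mpr hθ]
      _ ≤ 37 * log (1 / (gaussianReal 0 1).real (Ioi θ)) := by
          linarith [sq_div_two_le_log_one_div_measureReal_Ioi hθ]
  · calc (φ θ / (gaussianReal 0 1).real (Ioi θ)) ^ 2 ≤ (2 * exp (1 / 2)) ^ 2 :=
          pow_le_pow_left₀ hratio
            (gaussianPDFReal_div_measureReal_Ioi_le_of_le_one hθ hθ₁.le) 2
      _ = 4 * exp 1 := by rw [mul_pow, ← exp_nat_mul]; norm_num
      _ ≤ 37 * log 2 := by nlinarith [exp_one_lt_d9, log_two_gt_d9]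
      _ ≤ 37 * log (1 / (gaussianReal 0 1).real (Ioi θ)) := by
          linarith [log_two_le_log_one_div_measureReal_Ioi hθ]
end

section
/- Let $X$ be a chi-squared random variable with $d$ degrees of freedom and let $m_d$ be its median. Then $\mathbb{E}[\sqrt{X}\,\mathbf{1}_{X \le m_d}] \ge \frac{1}{10}\,\mathbb{E}[\sqrt{X}]$. -/
/-!
By Cauchy–Schwarz, `√d · √X ≥ ∑ |Zᵢ|`, so `E[√X] ≥ √d · E|Z₁| = √d · √(2/π)`. On the complement
of the median set, AM–GM gives `√X ≤ (X + 2d) / (2√(2d))`; since `E[X] = d` and that set has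
probability `1/2`, its contribution to `E[√X]` is at most `√(d/2) = (√π/2) · √d · √(2/π)`, which
is at most `(9/10) E[√X]` because `π < 3.24`.
-/

open MeasureTheory ProbabilityTheory Real Finset
open scoped NNReal

lemma Real.sqrt_le_add_sq_div {x c : ℝ} (hx : 0 ≤ x) (hc : 0 < c) :
    √x ≤ (x + c ^ 2) / (2 * c) := by
  rw [le_div_iff₀ (by positivity)]
  nlinarith [sq_nonneg (√x - c), sq_sqrt hx]

lemma Finset.sum_abs_le_sqrt_card_mul_sqrt_sum_sq {ι : Type*} (s : Finset ι) (f : ι → ℝ) :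
    ∑ i ∈ s, |f i| ≤ √(#s : ℝ) * √(∑ i ∈ s, f i ^ 2) := by
  rw [← sqrt_mul (Nat.cast_nonneg _), le_sqrt (sum_nonneg fun i _ ↦ abs_nonneg _) (by positivity)]
  simpa only [sq_abs] using sq_sum_le_card_mul_sum_sq (s := s) (f := fun i ↦ |f i|)

lemma integral_sq_gaussianReal_zero (v : ℝ≥0) : ∫ x, x ^ 2 ∂gaussianReal 0 v = v := by
  rw [← variance_of_integral_eq_zero aemeasurable_id' (integral_id_gaussianReal),
    variance_fun_id_gaussianReal]

lemma integral_Ioi_mul_exp_neg_sq_div_two : ∫ x in Set.Ioi 0, x * exp (-x ^ 2 / 2) = 1 := by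
  have h := integral_rpow_mul_exp_neg_mul_rpow (p := 2) (q := 1) (b := 1 / 2)
    (by norm_num) (by norm_num) (by norm_num)
  norm_num [Real.rpow_two] at h
  convert h using 3 with x
  ring_nf

lemma integral_abs_gaussianReal_zero_one : ∫ x, |x| ∂gaussianReal 0 1 = √(2 / π) := by
  have h := integral_comp_abs (f := fun y ↦ y * exp (-y ^ 2 / 2))
  simp only [sq_abs, integral_Ioi_mul_exp_neg_sq_div_two] at h
  have hpdf (x : ℝ) : gaussianPDFReal 0 1 x • |x| = (√(2 * π))⁻¹ * (|x| * exp (-x ^ 2 / 2)) := by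
    simp only [gaussianPDFReal, smul_eq_mul, NNReal.coe_one, mul_one, sub_zero]
    ring
  simp only [integral_gaussianReal_eq_integral_smul one_ne_zero, hpdf, integral_const_mul, h]
  rw [sqrt_div' _ pi_pos.le, sqrt_mul zero_le_two]
  field_simp
  rw [sq_sqrt zero_le_two]

section SqrtIntegral

variable {Ω : Type*} [MeasurableSpace Ω] {μ : Measure Ω} [IsFiniteMeasure μ] {f : Ω → ℝ}

lemma MeasureTheory.Integrable.sqrt (hf : Integrable f μ) (hf0 : 0 ≤ᵐ[μ] f) :
    Integrable (fun ω ↦ √(f ω)) μ := by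
  refine (((integrable_add_const_iff (c := (1 : ℝ))).mpr hf).div_const 2).mono
    (continuous_sqrt.comp_aestronglyMeasurable hf.aestronglyMeasurable) ?_
  filter_upwards [hf0] with ω (hω : 0 ≤ f ω)
  rw [norm_of_nonneg (sqrt_nonneg _), norm_of_nonneg (by linarith)]
  simpa using Real.sqrt_le_add_sq_div hω one_pos

lemma setIntegral_sqrt_le (hf : Integrable f μ) (hf0 : 0 ≤ᵐ[μ] f) (s : Set Ω) {c : ℝ}
    (hc : 0 < c) :
    ∫ ω in s, √(f ω) ∂μ ≤ (∫ ω in s, f ω ∂μ + c ^ 2 * μ.real s) / (2 * c) := by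
  calc ∫ ω in s, √(f ω) ∂μ ≤ ∫ ω in s, (f ω + c ^ 2) / (2 * c) ∂μ :=
        integral_mono_of_nonneg (ae_of_all _ fun ω ↦ sqrt_nonneg _)
          ((integrable_add_const_iff.mpr hf).div_const _).integrableOn
          (ae_restrict_of_ae (hf0.mono fun ω hω ↦ Real.sqrt_le_add_sq_div hω hc))
    _ = (∫ ω in s, f ω ∂μ + c ^ 2 * μ.real s) / (2 * c) := by
        rw [integral_div, integral_add hf.integrableOn (integrable_const _), setIntegral_const,
          smul_eq_mul, mul_comm]

end SqrtIntegral

section GaussianCoordinates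

variable {Ω ι : Type*} [MeasurableSpace Ω] {μ : Measure Ω} [Fintype ι] {Z : ι → Ω → ℝ}

lemma integral_sum_sq_of_hasLaw_gaussianReal (hZ : ∀ i, HasLaw (Z i) (gaussianReal 0 1) μ) :
    ∫ ω, ∑ i, Z i ω ^ 2 ∂μ = Fintype.card ι := by
  have h (i : ι) : ∫ ω, Z i ω ^ 2 ∂μ = 1 := by
    have := (hZ i).integral_comp (f := fun x ↦ x ^ 2) (by fun_prop)
    rw [integral_sq_gaussianReal_zero] at this
    exact_mod_cast this
  rw [integral_finsetSum _ fun i _ ↦ (hZ i).hasGaussianLaw.memLp_two.integrable_sq]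
  simp [h]

lemma sqrt_card_mul_le_integral_sqrt_sum_sq_of_hasLaw_gaussianReal [IsFiniteMeasure μ]
    (hZ : ∀ i, HasLaw (Z i) (gaussianReal 0 1) μ) :
    √(Fintype.card ι) * √(2 / π) ≤ ∫ ω, √(∑ i, Z i ω ^ 2) ∂μ := by
  set n : ℝ := (Fintype.card ι : ℝ)
  have habs (i : ι) : ∫ ω, |Z i ω| ∂μ = √(2 / π) := by
    rw [← integral_abs_gaussianReal_zero_one]
    exact (hZ i).integral_comp (f := fun x ↦ |x|) (by fun_prop)
  have hint (i : ι) : Integrable (fun ω ↦ |Z i ω|) μ := (hZ i).hasGaussianLaw.integrable.abs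
  have hsqrt : Integrable (fun ω ↦ √(∑ i, Z i ω ^ 2)) μ :=
    (integrable_finsetSum _ fun i _ ↦ (hZ i).hasGaussianLaw.memLp_two.integrable_sq).sqrt
      (ae_of_all _ fun ω ↦ by positivity)
  have key : √n * (√n * √(2 / π)) ≤ √n * ∫ ω, √(∑ i, Z i ω ^ 2) ∂μ := calc
    √n * (√n * √(2 / π)) = ∫ ω, ∑ i, |Z i ω| ∂μ := by
      rw [integral_finsetSum _ fun i _ ↦ hint i]
      simp [habs, n, ← mul_assoc, mul_self_sqrt]
    _ ≤ ∫ ω, √n * √(∑ i, Z i ω ^ 2) ∂μ :=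
      integral_mono (integrable_finsetSum _ fun i _ ↦ hint i) (hsqrt.const_mul _)
        fun ω ↦ by simpa using sum_abs_le_sqrt_card_mul_sqrt_sum_sq univ (Z · ω)
    _ = √n * ∫ ω, √(∑ i, Z i ω ^ 2) ∂μ := integral_const_mul _ _
  rcases (sqrt_nonneg n).eq_or_lt with hn | hn
  · rw [← hn, zero_mul]
    exact integral_nonneg fun ω ↦ sqrt_nonneg _
  · exact le_of_mul_le_mul_left key hn

lemma setIntegral_sqrt_sum_sq_le_of_hasLaw_gaussianReal [IsFiniteMeasure μ]
    (hZ : ∀ i, HasLaw (Z i) (gaussianReal 0 1) μ) (hι : 0 < Fintype.card ι) {s : Set Ω}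
    (hs : μ.real s ≤ 1 / 2) :
    ∫ ω in s, √(∑ i, Z i ω ^ 2) ∂μ ≤ √π / 2 * (√(Fintype.card ι) * √(2 / π)) := by
  set n : ℝ := (Fintype.card ι : ℝ)
  have hn : 0 < √n := sqrt_pos.mpr (by simpa [n] using hι)
  have hX0 : 0 ≤ᵐ[μ] fun ω ↦ ∑ i, Z i ω ^ 2 := ae_of_all _ fun ω ↦ by positivity
  have hXint : Integrable (fun ω ↦ ∑ i, Z i ω ^ 2) μ :=
    integrable_finsetSum _ fun i _ ↦ (hZ i).hasGaussianLaw.memLp_two.integrable_sq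
  have hXs : ∫ ω in s, ∑ i, Z i ω ^ 2 ∂μ ≤ n := by
    simpa [integral_sum_sq_of_hasLaw_gaussianReal hZ] using setIntegral_le_integral hXint hX0
  calc _ ≤ _ := setIntegral_sqrt_le hXint hX0 s (c := √2 * √n) (by positivity)
    _ ≤ (n + (√2 * √n) ^ 2 * (1 / 2)) / (2 * (√2 * √n)) := by gcongr
    _ = √π / 2 * (√n * √(2 / π)) := by
      rw [sqrt_div' _ pi_pos.le]
      field_simp
      rw [sq_sqrt zero_le_two, sq_sqrt (Nat.cast_nonneg _)]
      ring

end GaussianCoordinates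

theorem sqrt_chiSq_truncated_expectation_ge_general
    {Ω : Type*} [MeasurableSpace Ω] (μ : Measure Ω) [IsProbabilityMeasure μ]
    {d : ℕ} (hd : 0 < d)
    (Z : Fin d → Ω → ℝ)
    (hgauss : ∀ i, Measure.map (Z i) μ = gaussianReal 0 1)
    (X : Ω → ℝ) (hX : ∀ ω, X ω = ∑ i, (Z i ω) ^ 2)
    (m : ℝ) (hmed : μ {ω | X ω ≤ m} = 1 / 2) :
    (1 / 10 : ℝ) * ∫ ω, Real.sqrt (X ω) ∂μ ≤
      ∫ ω in {ω | X ω ≤ m}, Real.sqrt (X ω) ∂μ := by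
  have hZ (i : Fin d) : HasLaw (Z i) (gaussianReal 0 1) μ :=
    ⟨.of_map_ne_zero (hgauss i ▸ IsProbabilityMeasure.ne_zero _), hgauss i⟩
  obtain rfl : X = fun ω ↦ ∑ i, Z i ω ^ 2 := funext hX
  set S := {ω | ∑ i, Z i ω ^ 2 ≤ m}
  have hXint : Integrable (fun ω ↦ ∑ i, Z i ω ^ 2) μ :=
    integrable_finsetSum _ fun i _ ↦ (hZ i).hasGaussianLaw.memLp_two.integrable_sq
  have hS : NullMeasurableSet S μ :=
    hXint.aemeasurable.nullMeasurableSet_preimage measurableSet_Iic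
  have hSc : μ.real Sᶜ = 1 / 2 := by
    rw [probReal_compl_eq_one_sub₀ hS, measureReal_def, hmed]
    norm_num
  have htail := setIntegral_sqrt_sum_sq_le_of_hasLaw_gaussianReal hZ (by simpa) hSc.le
  have hlow := sqrt_card_mul_le_integral_sqrt_sum_sq_of_hasLaw_gaussianReal (μ := μ) hZ
  rw [Fintype.card_fin] at htail hlow
  have hπ : √π ≤ 9 / 5 := by
    rw [sqrt_le_left (by norm_num)]
    linarith [pi_lt_d2]
  have hconst : √π / 2 * (√d * √(2 / π)) ≤ 9 / 10 * (√d * √(2 / π)) :=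
    mul_le_mul_of_nonneg_right (by linarith) (by positivity)
  rw [← integral_add_compl₀ hS (hXint.sqrt (ae_of_all _ fun ω ↦ by positivity))] at hlow ⊢
  linarith

/-- if `X ∼ χ²_d` (the sum of squares of `d` i.i.d. standard normals)
and `m` is its median, then `E[√X 1_{X ≤ m}] ≥ (1/10) E[√X]`. -/
theorem sqrt_chiSq_truncated_expectation_ge
    {Ω : Type*} [MeasurableSpace Ω] (μ : Measure Ω) [IsProbabilityMeasure μ]
    {d : ℕ} (hd : 0 < d)
    (Z : Fin d → Ω → ℝ)
    (hindep : iIndepFun (m := fun _ : Fin d => (inferInstance : MeasurableSpace ℝ)) Z μ)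
    (hgauss : ∀ i, Measure.map (Z i) μ = gaussianReal 0 1)
    (X : Ω → ℝ) (hX : ∀ ω, X ω = ∑ i, (Z i ω) ^ 2)
    (m : ℝ) (hmed : μ {ω | X ω ≤ m} = 1 / 2) :
    (1 / 10 : ℝ) * ∫ ω, Real.sqrt (X ω) ∂μ ≤
      ∫ ω in {ω | X ω ≤ m}, Real.sqrt (X ω) ∂μ :=
  sqrt_chiSq_truncated_expectation_ge_general μ hd Z hgauss X hX m hmed
end

section
/- Let $\boldsymbol{Z} = (Z_1,\ldots,Z_d) \sim N(0, I_d)$ and let $m_d$ denote the median of the $\chi^2_d$ distribution. Then $\frac{1}{10\sqrt{2}} \le \mathbb{E}[\max_{1\le i\le d}|Z_i|\, \mathbf{1}_{\|\boldsymbol{Z}\|^2 \le m_d}] \le \sqrt{2\log(2d)}$. -/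
open MeasureTheory ProbabilityTheory Real
open scoped NNReal

/-!
Lower bound: `maxᵢ |Zᵢ| ≥ |Z₁|`, and the Gaussian density is at most `1/√(2π)`, so
`P(|Z₁| < 3/10) ≤ 3/(5√(2π))`. Hence the event `|Z₁| ≥ 3/10` meets the median event
`{‖Z‖² ≤ m}` with probability at least `1/2 - 3/(5√(2π))`, and Markov's inequality on that
event gives `E[maxᵢ |Zᵢ|; ‖Z‖² ≤ m] ≥ (3/10)(1/2 - 3/(5√(2π))) ≥ 1/(10√2)`.

Upper bound: by Jensen,
`exp (t E[maxᵢ |Zᵢ|]) ≤ E[exp (t maxᵢ |Zᵢ|)] ≤ ∑ᵢ E[e^{t Zᵢ} + e^{-t Zᵢ}] = 2d e^{t²/2}`,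
and `t = √(2 log (2d))` gives the bound.
-/

namespace ProbabilityTheory

lemma gaussianPDFReal_le (m : ℝ) (v : ℝ≥0) (x : ℝ) :
    gaussianPDFReal m v x ≤ (√(2 * π * v))⁻¹ := by
  rw [gaussianPDFReal]
  refine mul_le_of_le_one_right (by positivity) (exp_le_one_iff.2 ?_)
  exact div_nonpos_of_nonpos_of_nonneg (neg_nonpos.2 (sq_nonneg _)) (by positivity)

lemma gaussianReal_le_mul_volume (m : ℝ) {v : ℝ≥0} (hv : v ≠ 0) (s : Set ℝ) :
    gaussianReal m v s ≤ ENNReal.ofReal (√(2 * π * v))⁻¹ * volume s := by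
  rw [gaussianReal_apply m hv, ← setLIntegral_const]
  exact lintegral_mono fun x => ENNReal.ofReal_le_ofReal (gaussianPDFReal_le m v x)

variable {Ω : Type*} [MeasurableSpace Ω] {μ : Measure Ω}

lemma aemeasurable_of_map_eq_gaussianReal {X : Ω → ℝ} {m : ℝ} {v : ℝ≥0}
    (hX : μ.map X = gaussianReal m v) : AEMeasurable X μ :=
  .of_map_ne_zero (hX ▸ IsProbabilityMeasure.ne_zero _)

lemma hasSubgaussianMGF_of_map_eq_gaussianReal {X : Ω → ℝ} {v : ℝ≥0}
    (hX : μ.map X = gaussianReal 0 v) : HasSubgaussianMGF X v μ where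
  integrable_exp_mul t := by
    exact (integrable_map_measure (g := fun x => exp (t * x)) (by fun_prop)
      (aemeasurable_of_map_eq_gaussianReal hX)).1
      (hX ▸ integrable_exp_mul_gaussianReal t)
  mgf_le t := by simp [mgf_gaussianReal hX]

lemma measureReal_abs_lt_le_of_map_eq_gaussianReal {X : Ω → ℝ} {v : ℝ≥0} (hv : v ≠ 0)
    (hX : μ.map X = gaussianReal 0 v) {a : ℝ} (ha : 0 ≤ a) :
    μ.real {ω | |X ω| < a} ≤ 2 * a / √(2 * π * v) := by
  have hXm := aemeasurable_of_map_eq_gaussianReal hX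
  have hset : {ω | |X ω| < a} = X ⁻¹' Set.Ioo (-a) a := by ext; simp [abs_lt]
  rw [measureReal_def, hset, ← Measure.map_apply₀ hXm measurableSet_Ioo.nullMeasurableSet, hX]
  refine ENNReal.toReal_le_of_le_ofReal (by positivity)
    ((gaussianReal_le_mul_volume 0 hv _).trans_eq ?_)
  rw [volume_Ioo, ← ENNReal.ofReal_mul (by positivity)]
  congr 1
  ring

lemma measureReal_add_measureReal_le_measureReal_inter_add_one [IsProbabilityMeasure μ]
    (s : Set Ω) {t : Set Ω} (ht : NullMeasurableSet t μ) :
    μ.real s + μ.real t ≤ μ.real (s ∩ t) + 1 := by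
  rw [← measureReal_union_add_inter₀ ht]
  linarith [measureReal_le_one (μ := μ) (s := s ∪ t)]

lemma mul_sub_le_setIntegral_of_abs_le_of_map_eq_gaussianReal [IsProbabilityMeasure μ]
    {X f : Ω → ℝ} {v : ℝ≥0} (hv : v ≠ 0) (hX : μ.map X = gaussianReal 0 v)
    (hXf : ∀ ω, |X ω| ≤ f ω) (hf : Integrable f μ) (s : Set Ω) {a : ℝ} (ha : 0 ≤ a) :
    a * (μ.real s - 2 * a / √(2 * π * v)) ≤ ∫ ω in s, f ω ∂μ := by
  set S := {ω | |X ω| < a}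
  have hS : NullMeasurableSet S μ :=
    nullMeasurableSet_lt (aemeasurable_of_map_eq_gaussianReal hX).abs aemeasurable_const
  have hsS : μ.real s - 2 * a / √(2 * π * v) ≤ μ.real (s ∩ Sᶜ) := by
    linarith [measureReal_add_measureReal_le_measureReal_inter_add_one s hS.compl,
      probReal_compl_eq_one_sub₀ hS, measureReal_abs_lt_le_of_map_eq_gaussianReal hv hX ha]
  have hsub : μ.real (s ∩ Sᶜ) ≤ (μ.restrict s).real {ω | a ≤ f ω} := by
    rw [Set.inter_comm]
    refine ENNReal.toReal_mono (measure_ne_top _ _) ((Measure.le_restrict_apply _ _).trans ?_)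
    exact measure_mono fun ω (hω : ¬|X ω| < a) => (not_lt.1 hω).trans (hXf ω)
  calc a * (μ.real s - 2 * a / √(2 * π * v)) ≤ a * (μ.restrict s).real {ω | a ≤ f ω} :=
        mul_le_mul_of_nonneg_left (hsS.trans hsub) ha
    _ ≤ ∫ ω in s, f ω ∂μ :=
        mul_meas_ge_le_integral_of_nonneg
          (ae_of_all _ fun ω => (abs_nonneg _).trans (hXf ω)) hf.restrict a

end ProbabilityTheory

lemma exp_mul_iSup_abs_le_sum {ι : Type*} [Fintype ι] [Nonempty ι] (x : ι → ℝ) (t : ℝ) :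
    exp (t * ⨆ i, |x i|) ≤ ∑ i, (exp (t * x i) + exp (-t * x i)) := by
  obtain ⟨j, hj⟩ := exists_eq_ciSup_of_finite (f := fun i => |x i|)
  rw [← hj]
  refine le_trans ?_ (Finset.single_le_sum (f := fun i => exp (t * x i) + exp (-t * x i))
    (fun i _ => by positivity) (Finset.mem_univ j))
  rcases abs_cases (x j) with ⟨h, _⟩ | ⟨h, _⟩ <;> rw [h]
  · linarith [exp_pos (-t * x j)]
  · rw [show t * -x j = -t * x j by ring]
    linarith [exp_pos (t * x j)]

namespace MeasureTheory

variable {Ω : Type*} [MeasurableSpace Ω] {μ : Measure Ω}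

lemma integrable_iSup_abs {ι : Type*} [Fintype ι] {X : ι → Ω → ℝ}
    (hX : ∀ i, Integrable (X i) μ) : Integrable (fun ω => ⨆ i, |X i ω|) μ := by
  refine (integrable_finsetSum Finset.univ fun i _ => (hX i).abs).mono'
    (AEMeasurable.iSup fun i => (hX i).aemeasurable.abs).aestronglyMeasurable
    (ae_of_all _ fun ω => ?_)
  rw [norm_of_nonneg (Real.iSup_nonneg fun i => abs_nonneg _)]
  exact Real.iSup_le (fun i => Finset.single_le_sum (f := fun i => |X i ω|)
    (fun i _ => abs_nonneg _) (Finset.mem_univ i)) (Finset.sum_nonneg fun i _ => abs_nonneg _)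

lemma exp_integral_le_integral_exp [IsProbabilityMeasure μ] {f : Ω → ℝ} (hf : Integrable f μ)
    (hexp : Integrable (fun ω => exp (f ω)) μ) :
    exp (∫ ω, f ω ∂μ) ≤ ∫ ω, exp (f ω) ∂μ :=
  convexOn_exp.map_integral_le continuous_exp.continuousOn isClosed_univ
    (ae_of_all _ fun _ => Set.mem_univ _) hf hexp

end MeasureTheory

namespace ProbabilityTheory

variable {Ω : Type*} [MeasurableSpace Ω] {μ : Measure Ω} [IsProbabilityMeasure μ]
  {ι : Type*} [Fintype ι] [Nonempty ι] {X : ι → Ω → ℝ} {c : ℝ≥0}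

lemma mul_integral_iSup_abs_le_of_hasSubgaussianMGF (hX : ∀ i, HasSubgaussianMGF (X i) c μ)
    (t : ℝ) :
    t * ∫ ω, ⨆ i, |X i ω| ∂μ ≤ log (2 * Fintype.card ι) + c * t ^ 2 / 2 := by
  have hM : Integrable (fun ω => ⨆ i, |X i ω|) μ := integrable_iSup_abs fun i => (hX i).integrable
  have hexp i : Integrable (fun ω => exp (t * X i ω) + exp (-t * X i ω)) μ :=
    ((hX i).integrable_exp_mul t).add ((hX i).integrable_exp_mul (-t))
  have hsum : Integrable (fun ω => ∑ i, (exp (t * X i ω) + exp (-t * X i ω))) μ :=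
    integrable_finsetSum _ fun i _ => hexp i
  have hexpM : Integrable (fun ω => exp (t * ⨆ i, |X i ω|)) μ :=
    hsum.mono' (hM.aemeasurable.const_mul t).exp.aestronglyMeasurable (ae_of_all _ fun ω => by
      rw [norm_of_nonneg (exp_pos _).le]
      exact exp_mul_iSup_abs_le_sum _ t)
  have hexp_le : exp (t * ∫ ω, ⨆ i, |X i ω| ∂μ) ≤ 2 * Fintype.card ι * exp (c * t ^ 2 / 2) :=
    calc exp (t * ∫ ω, ⨆ i, |X i ω| ∂μ) = exp (∫ ω, t * ⨆ i, |X i ω| ∂μ) := by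
          rw [integral_const_mul]
      _ ≤ ∫ ω, exp (t * ⨆ i, |X i ω|) ∂μ := exp_integral_le_integral_exp (hM.const_mul t) hexpM
      _ ≤ ∫ ω, ∑ i, (exp (t * X i ω) + exp (-t * X i ω)) ∂μ :=
          integral_mono hexpM hsum fun ω => exp_mul_iSup_abs_le_sum _ t
      _ = ∑ i, (mgf (X i) μ t + mgf (X i) μ (-t)) := by
          rw [integral_finsetSum _ fun i _ => hexp i]
          exact Finset.sum_congr rfl fun i _ =>
            integral_add ((hX i).integrable_exp_mul t) ((hX i).integrable_exp_mul (-t))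
      _ ≤ ∑ _i : ι, (exp (c * t ^ 2 / 2) + exp (c * t ^ 2 / 2)) :=
          Finset.sum_le_sum fun i _ =>
            add_le_add ((hX i).mgf_le t) (by simpa using (hX i).mgf_le (-t))
      _ = 2 * Fintype.card ι * exp (c * t ^ 2 / 2) := by
          rw [Finset.sum_const, Finset.card_univ, nsmul_eq_mul]
          ring
  have := log_le_log (exp_pos _) hexp_le
  rwa [log_exp, log_mul (by positivity) (exp_pos _).ne', log_exp] at this

lemma integral_iSup_abs_le_of_hasSubgaussianMGF (hX : ∀ i, HasSubgaussianMGF (X i) c μ)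
    (hc : 0 < c) :
    ∫ ω, ⨆ i, |X i ω| ∂μ ≤ √(2 * c * log (2 * Fintype.card ι)) := by
  set L := log (2 * Fintype.card ι)
  have hL : 0 < L := log_pos (by have := Fintype.card_pos (α := ι); norm_cast; omega)
  -- minimizes `L / t + c * t / 2`
  set t := √(2 * L / c)
  have ht : 0 < t := by positivity
  have ht2 : c * t ^ 2 = 2 * L := by
    rw [sq_sqrt (by positivity)]
    field_simp
  have hbound : ∫ ω, ⨆ i, |X i ω| ∂μ ≤ c * t := by
    have := mul_integral_iSup_abs_le_of_hasSubgaussianMGF hX t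
    nlinarith
  calc ∫ ω, ⨆ i, |X i ω| ∂μ ≤ c * t := hbound
    _ = √((c : ℝ) ^ 2 * (2 * L / c)) := by rw [sqrt_mul (sq_nonneg _), sqrt_sq c.coe_nonneg]
    _ = √(2 * c * L) := by
      congr 1
      field_simp

end ProbabilityTheory

lemma one_div_ten_mul_sqrt_two_le :
    1 / (10 * √2) ≤ 3 / 10 * (1 / 2 - 3 / 5 / √(2 * π)) := by
  have hs2 : (1.414 : ℝ) ≤ √2 := le_sqrt_of_sq_le (by norm_num)
  have hs2π : (2.5 : ℝ) ≤ √(2 * π) := le_sqrt_of_sq_le (by linarith [pi_gt_d2])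
  have hinv : 3 / 5 / √(2 * π) ≤ 6 / 25 := by
    rw [div_le_iff₀ (by positivity)]
    linarith
  rw [div_le_iff₀ (by positivity)]
  nlinarith

theorem truncated_max_abs_gaussian_bounds_general
    {Ω : Type*} [MeasurableSpace Ω] (μ : Measure Ω) [IsProbabilityMeasure μ]
    {d : ℕ} (hd : 0 < d)
    (Z : Fin d → Ω → ℝ)
    (hgauss : ∀ i, Measure.map (Z i) μ = gaussianReal 0 1)
    (m : ℝ) (hmed : μ {ω | ∑ i, (Z i ω) ^ 2 ≤ m} = 1 / 2) :
    1 / (10 * Real.sqrt 2) ≤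
      ∫ ω in {ω | ∑ i, (Z i ω) ^ 2 ≤ m}, (⨆ i, |Z i ω|) ∂μ ∧
    (∫ ω in {ω | ∑ i, (Z i ω) ^ 2 ≤ m}, (⨆ i, |Z i ω|) ∂μ) ≤
      Real.sqrt (2 * Real.log (2 * d)) := by
  have : Nonempty (Fin d) := ⟨⟨0, hd⟩⟩
  have hZ i : HasSubgaussianMGF (Z i) 1 μ := hasSubgaussianMGF_of_map_eq_gaussianReal (hgauss i)
  have hM : Integrable (fun ω => ⨆ i, |Z i ω|) μ := integrable_iSup_abs fun i => (hZ i).integrable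
  constructor
  · have hlow := mul_sub_le_setIntegral_of_abs_le_of_map_eq_gaussianReal one_ne_zero
      (hgauss ⟨0, hd⟩) (fun ω => le_ciSup (f := fun i => |Z i ω|) (Set.finite_range _).bddAbove _)
      hM {ω | ∑ i, (Z i ω) ^ 2 ≤ m} (a := 3 / 10) (by norm_num)
    rw [measureReal_def, hmed] at hlow
    refine one_div_ten_mul_sqrt_two_le.trans (le_of_eq_of_le ?_ hlow)
    norm_num
  · calc _ ≤ ∫ ω, ⨆ i, |Z i ω| ∂μ :=
          setIntegral_le_integral hM (ae_of_all _ fun ω => Real.iSup_nonneg fun i => abs_nonneg _)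
      _ ≤ _ := by simpa using integral_iSup_abs_le_of_hasSubgaussianMGF hZ one_pos

/-- for `Z = (Z₁,…,Z_d) ∼ N(0, I_d)` and `m` the median of the `χ²_d`
variable `Σᵢ Zᵢ²`, one has
`1/(10√2) ≤ E[maxᵢ |Zᵢ| · 1_{Σᵢ Zᵢ² ≤ m}] ≤ √(2 log(2d))`. -/
theorem truncated_max_abs_gaussian_bounds
    {Ω : Type*} [MeasurableSpace Ω] (μ : Measure Ω) [IsProbabilityMeasure μ]
    {d : ℕ} (hd : 0 < d)
    (Z : Fin d → Ω → ℝ)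
    (hindep : iIndepFun Z μ)
    (hgauss : ∀ i, Measure.map (Z i) μ = gaussianReal 0 1)
    (m : ℝ) (hmed : μ {ω | ∑ i, (Z i ω) ^ 2 ≤ m} = 1 / 2) :
    1 / (10 * Real.sqrt 2) ≤
      ∫ ω in {ω | ∑ i, (Z i ω) ^ 2 ≤ m}, (⨆ i, |Z i ω|) ∂μ ∧
    (∫ ω in {ω | ∑ i, (Z i ω) ^ 2 ≤ m}, (⨆ i, |Z i ω|) ∂μ) ≤
      Real.sqrt (2 * Real.log (2 * d)) :=
  truncated_max_abs_gaussian_bounds_general μ hd Z hgauss m hmed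
end
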